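/- arXiv:1906.05107 — 2 statements merged into one kernel-verified Lean document; each statement's English description precedes it below -/
import Mathlib

section
/- Let d ≥ 1, r ≥ 1, and let ω : ℤ^d → ℝ. Suppose (i) there are ν > 0 and 0 < c₁ ≤ c₂ with c₁⟨a⟩^{ν} ≤ ω_a ≤ c₂⟨a⟩^{ν} for all a ∈ ℤ^d, and (ii) there are γ > 0 and α > 0 such that for every real M ≥ 1 and every non-resonant tuple ((δ₁,a₁),…,(δ_{r+2},a_{r+2})) ∈ ({−1,+1}×ℤ^d)^{r+2} with ⟨a_i⟩ ≤ M for all i one has |δ₁ω_{a₁}+⋯+δ_{r+2}ω_{a_{r+2}}| ≥ γ M^{−α}. Then there exist γ' > 0 and α' > 0, depending only on r, ν, c₁, c₂, γ, α, such that for every real N ≥ 1, every tuple ((δ₁,a₁),…,(δ_r,a_r)) ∈ ({−1,+1}×ℤ^d)^r with ⟨a_i⟩ ≤ N for all i, and all b₁, b₂ ∈ ℤ^d with ⟨b₁⟩ > N, ⟨b₂⟩ > N and δ₁a₁+⋯+δ_ra_r + b₁ + b₂ = 0, one has |δ₁ω_{a₁}+⋯+δ_rω_{a_r}+ω_{b₁}+ω_{b₂}|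 ≥ γ' N^{−α'}. (Condition (H3) follows from (H1) when the frequencies grow polynomially.) -/
/-- Japanese bracket `⟨a⟩ = (1+|a|²)^{1/2}` for `a ∈ ℤ^d`. -/
noncomputable def jap {d : ℕ} (a : Fin d → ℤ) : ℝ :=
  Real.sqrt (1 + ∑ i, ((a i : ℝ)) ^ 2)

/-- A tuple `((δ₁,a₁),…,(δ_r,a_r))` is resonant if some permutation `σ` pairs each index `i`
with an index `σ i` of opposite sign and of the same modulus `|a_i| = |a_{σ i}|`. -/
def IsResonant {d r : ℕ} (δ : Fin r → ℤ) (a : Fin r → Fin d → ℤ) : Prop :=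
  ∃ σ : Equiv.Perm (Fin r), ∀ i, δ i = -δ (σ i) ∧ (∑ j, (a i j) ^ 2) = ∑ j, (a (σ i) j) ^ 2

lemma one_le_jap {d : ℕ} (a : Fin d → ℤ) : 1 ≤ jap a := by
  have h : (1:ℝ) ≤ 1 + ∑ i, ((a i : ℝ)) ^ 2 := by
    have : (0:ℝ) ≤ ∑ i, ((a i : ℝ)) ^ 2 := by positivity
    linarith
  have := Real.sqrt_le_sqrt h
  simpa [jap, Real.sqrt_one] using this

lemma sq_sum_lt_of_jap_lt {d : ℕ} {x y : Fin d → ℤ} (h : jap x < jap y) :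
    (∑ j, (x j) ^ 2) < ∑ j, (y j) ^ 2 := by
  by_contra hle
  push_neg at hle
  have hle' : (∑ j, ((y j : ℝ)) ^ 2) ≤ ∑ j, ((x j : ℝ)) ^ 2 := by exact_mod_cast hle
  have : jap y ≤ jap x := Real.sqrt_le_sqrt (by linarith)
  linarith

theorem H3_follows_from_H1
    (r : ℕ) (hr : 1 ≤ r) (ν c₁ c₂ γ α : ℝ)
    (hν : 0 < ν) (hc₁ : 0 < c₁) (hc₁₂ : c₁ ≤ c₂) (hγ : 0 < γ) (hα : 0 < α) :
    ∃ γ' α' : ℝ, 0 < γ' ∧ 0 < α' ∧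
      ∀ d : ℕ, 1 ≤ d → ∀ ω : (Fin d → ℤ) → ℝ,
        (∀ a : Fin d → ℤ, c₁ * jap a ^ ν ≤ ω a ∧ ω a ≤ c₂ * jap a ^ ν) →
        (∀ M : ℝ, 1 ≤ M →
          ∀ δ : Fin (r + 2) → ℤ, (∀ i, δ i = 1 ∨ δ i = -1) →
            ∀ a : Fin (r + 2) → Fin d → ℤ, (∀ i, jap (a i) ≤ M) →
              ¬ IsResonant δ a → γ * M ^ (-α) ≤ |∑ i, (δ i : ℝ) * ω (a i)|) →
        ∀ N : ℝ, 1 ≤ N →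
          ∀ δ : Fin r → ℤ, (∀ i, δ i = 1 ∨ δ i = -1) →
            ∀ a : Fin r → Fin d → ℤ, (∀ i, jap (a i) ≤ N) →
              ∀ b₁ b₂ : Fin d → ℤ, N < jap b₁ → N < jap b₂ →
                (∑ i, δ i • a i) + b₁ + b₂ = 0 →
                  γ' * N ^ (-α')
                    ≤ |(∑ i, (δ i : ℝ) * ω (a i)) + ω b₁ + ω b₂| := by
  have hc₂ : 0 < c₂ := lt_of_lt_of_le hc₁ hc₁₂
  set K : ℝ := ((r : ℝ) * c₂ / c₁ + 1) ^ (1 / ν) with hKdef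
  have hbase : (1:ℝ) ≤ (r : ℝ) * c₂ / c₁ + 1 := by
    have : 0 ≤ (r : ℝ) * c₂ / c₁ := by positivity
    linarith
  have hK1 : 1 ≤ K := Real.one_le_rpow hbase (by positivity)
  have hK0 : 0 < K := lt_of_lt_of_le one_pos hK1
  have hKν : K ^ ν = (r : ℝ) * c₂ / c₁ + 1 := by
    rw [hKdef, ← Real.rpow_mul (by positivity), one_div, inv_mul_cancel₀ hν.ne',
      Real.rpow_one]
  refine ⟨min (γ * K ^ (-α)) c₁, α, lt_min (by positivity) hc₁, hα, ?_⟩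
  intro d hd ω hω hH1 N hN δ hδ a ha b₁ b₂ hb₁ hb₂ hsum
  have hN0 : (0:ℝ) < N := lt_of_lt_of_le one_pos hN
  have hNν : (1:ℝ) ≤ N ^ ν := Real.one_le_rpow hN hν.le
  have hNα : N ^ (-α) ≤ 1 := Real.rpow_le_one_of_one_le_of_nonpos hN (by linarith)
  have hNα0 : (0:ℝ) < N ^ (-α) := Real.rpow_pos_of_pos hN0 _
  -- bound on each a-term
  have hterm : ∀ i, -(c₂ * N ^ ν) ≤ (δ i : ℝ) * ω (a i) ∧ (δ i : ℝ) * ω (a i) ≤ c₂ * N ^ ν := by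
    intro i
    have h1 : 0 < ω (a i) := by
      have hj : (0:ℝ) < jap (a i) := lt_of_lt_of_le one_pos (one_le_jap _)
      exact lt_of_lt_of_le (mul_pos hc₁ (Real.rpow_pos_of_pos hj _)) (hω (a i)).1
    have h2 : ω (a i) ≤ c₂ * N ^ ν := by
      refine le_trans (hω (a i)).2 ?_
      have : jap (a i) ^ ν ≤ N ^ ν :=
        Real.rpow_le_rpow (Real.sqrt_nonneg _) (ha i) hν.le
      nlinarith
    rcases hδ i with h | h <;> rw [h] <;> push_cast <;> constructor <;> nlinarith
  have hTlow : -((r : ℝ) * (c₂ * N ^ ν)) ≤ ∑ i, (δ i : ℝ) * ω (a i) := by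
    calc -((r : ℝ) * (c₂ * N ^ ν)) = ∑ _i : Fin r, -(c₂ * N ^ ν) := by
          rw [Finset.sum_const, Finset.card_univ, Fintype.card_fin, nsmul_eq_mul]; ring
      _ ≤ ∑ i, (δ i : ℝ) * ω (a i) := Finset.sum_le_sum fun i _ => (hterm i).1
  by_cases hcase : jap b₁ ≤ K * N ∧ jap b₂ ≤ K * N
  · -- apply H1 with M = K * N
    obtain ⟨hB1, hB2⟩ := hcase
    have hM1 : 1 ≤ K * N := le_trans hN (le_mul_of_one_le_left hN0.le hK1)
    set δ' : Fin (r + 2) → ℤ := Fin.snoc (Fin.snoc δ 1) 1 with hδ'def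
    set a' : Fin (r + 2) → Fin d → ℤ := Fin.snoc (Fin.snoc a b₁) b₂ with ha'def
    have hδ'1 : ∀ i, δ' i = 1 ∨ δ' i = -1 := by
      intro i
      rcases Fin.eq_castSucc_or_eq_last i with ⟨j, rfl⟩ | rfl
      · rcases Fin.eq_castSucc_or_eq_last j with ⟨m, rfl⟩ | rfl
        · simpa [δ'] using hδ m
        · left; simp [δ']
      · left; simp [δ']
    have ha'M : ∀ i, jap (a' i) ≤ K * N := by
      intro i
      rcases Fin.eq_castSucc_or_eq_last i with ⟨j, rfl⟩ | rfl
      · rcases Fin.eq_castSucc_or_eq_last j with ⟨m, rfl⟩ | rfl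
        · simpa [a'] using le_trans (ha m) (le_mul_of_one_le_left hN0.le hK1)
        · simpa [a'] using hB1
      · simpa [a'] using hB2
    have hnr : ¬ IsResonant δ' a' := by
      rintro ⟨σ, hσ⟩
      obtain ⟨h1, h2⟩ := hσ (Fin.last (r + 1))
      have hδlast : δ' (Fin.last (r + 1)) = 1 := by simp [δ']
      have ha'last : a' (Fin.last (r + 1)) = b₂ := by simp [a']
      rw [hδlast] at h1
      rw [ha'last] at h2
      rcases Fin.eq_castSucc_or_eq_last (σ (Fin.last (r + 1))) with ⟨j, hj⟩ | hk
      · rcases Fin.eq_castSucc_or_eq_last j with ⟨m, rfl⟩ | rfl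
        · rw [hj] at h2
          simp only [ha'def, Fin.snoc_castSucc] at h2
          have hlt := sq_sum_lt_of_jap_lt (lt_of_le_of_lt (ha m) hb₂)
          omega
        · rw [hj] at h1
          simp only [hδ'def, Fin.snoc_castSucc, Fin.snoc_last] at h1
          omega
      · rw [hk] at h1
        simp [δ'] at h1
    have hsplit : ∑ i : Fin (r + 2), (δ' i : ℝ) * ω (a' i)
        = (∑ i, (δ i : ℝ) * ω (a i)) + ω b₁ + ω b₂ := by
      rw [Fin.sum_univ_castSucc, Fin.sum_univ_castSucc]
      simp only [hδ'def, ha'def, Fin.snoc_castSucc, Fin.snoc_last, Int.cast_one, one_mul]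
    have hmain := hH1 (K * N) hM1 δ' hδ'1 a' ha'M hnr
    rw [hsplit] at hmain
    refine le_trans ?_ hmain
    rw [Real.mul_rpow hK0.le hN0.le]
    calc min (γ * K ^ (-α)) c₁ * N ^ (-α) ≤ (γ * K ^ (-α)) * N ^ (-α) :=
          mul_le_mul_of_nonneg_right (min_le_left _ _) hNα0.le
      _ = γ * (K ^ (-α) * N ^ (-α)) := by ring
  · -- one of jap b₁, jap b₂ exceeds K * N; use growth
    have hωb₁ : c₁ * N ^ ν ≤ ω b₁ := by
      refine le_trans ?_ (hω b₁).1
      have : N ^ ν ≤ jap b₁ ^ ν := Real.rpow_le_rpow hN0.le hb₁.le hν.le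
      nlinarith
    have hωb₂ : c₁ * N ^ ν ≤ ω b₂ := by
      refine le_trans ?_ (hω b₂).1
      have : N ^ ν ≤ jap b₂ ^ ν := Real.rpow_le_rpow hN0.le hb₂.le hν.le
      nlinarith
    have hbig : ∀ b : Fin d → ℤ, K * N < jap b → ((r : ℝ) * c₂ + c₁) * N ^ ν ≤ ω b := by
      intro b hb
      refine le_trans ?_ (hω b).1
      have h1 : (K * N) ^ ν ≤ jap b ^ ν :=
        Real.rpow_le_rpow (by positivity) hb.le hν.le
      rw [Real.mul_rpow hK0.le hN0.le, hKν] at h1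
      have hc₁ne : c₁ ≠ 0 := hc₁.ne'
      have heq : c₁ * (((r : ℝ) * c₂ / c₁ + 1) * N ^ ν) = ((r : ℝ) * c₂ + c₁) * N ^ ν := by
        field_simp
      calc ((r : ℝ) * c₂ + c₁) * N ^ ν = c₁ * (((r : ℝ) * c₂ / c₁ + 1) * N ^ ν) := heq.symm
        _ ≤ c₁ * jap b ^ ν := mul_le_mul_of_nonneg_left h1 hc₁.le
    have hS : 2 * c₁ * N ^ ν ≤ (∑ i, (δ i : ℝ) * ω (a i)) + ω b₁ + ω b₂ := by
      rcases not_and_or.mp hcase with h | h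
      · push_neg at h
        have hB := hbig b₁ h
        linarith only [hTlow, hB, hωb₂]
      · push_neg at h
        have hB := hbig b₂ h
        linarith only [hTlow, hB, hωb₁]
    have habs : 2 * c₁ * N ^ ν ≤ |(∑ i, (δ i : ℝ) * ω (a i)) + ω b₁ + ω b₂| :=
      le_trans hS (le_abs_self _)
    have hγ'c₁ : min (γ * K ^ (-α)) c₁ ≤ c₁ := min_le_right _ _
    have h0 : 0 < min (γ * K ^ (-α)) c₁ := lt_min (by positivity) hc₁
    calc min (γ * K ^ (-α)) c₁ * N ^ (-α) ≤ c₁ * 1 := by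
          apply mul_le_mul hγ'c₁ hNα hNα0.le hc₁.le
      _ ≤ 2 * c₁ * N ^ ν := by
          have h1 : c₁ * 1 ≤ c₁ * N ^ ν := mul_le_mul_of_nonneg_left hNν hc₁.le
          have h2 : 0 ≤ c₁ * N ^ ν := by positivity
          linarith only [h1, h2]
      _ ≤ _ := habs
end

section
/- Let α ∈ (0,1), let f : ℝ → ℝ be a continuous nonnegative function, and let x : ℝ → ℝ be a differentiable function with x(t) ≥ 0 for all t, satisfying the differential inequality x'(t) ≤ (1/(1−α)) f(t) x(t)^{α} for all t ∈ ℝ. Then for every t ≥ 0 one has x(t)^{1−α} ≤ x(0)^{1−α} + ∫₀^{t} f(s) ds. -/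
/-!
Since `x` may vanish, where `x ^ (1 - α)` is not differentiable, shift it: for `η > 0` the
function `(x + η) ^ (1 - α)` is differentiable, and the differential inequality
bounds its derivative by `f · (x / (x + η)) ^ α ≤ f`; hence `(x + η) ^ (1 - α) - ∫₀ f` is antitone.
Letting `η → 0⁺` gives the claim.
-/

open Filter Topology

lemma one_sub_mul_rpow_neg_mul_le {α a η c d : ℝ} (hα : α < 1) (hα0 : 0 ≤ α) (ha : 0 ≤ a)
    (hη : 0 < η) (hc : 0 ≤ c) (hd : d ≤ (1 / (1 - α)) * c * a ^ α) :
    (1 - α) * (a + η) ^ (-α) * d ≤ c := by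
  have h1α : 0 < 1 - α := by linarith
  have haη : 0 < a + η := by linarith
  have hratio : a ^ α * (a + η) ^ (-α) ≤ 1 := by
    rw [Real.rpow_neg haη.le, ← div_eq_mul_inv,
      div_le_one (Real.rpow_pos_of_pos haη α)]
    exact Real.rpow_le_rpow ha (by linarith) hα0
  calc (1 - α) * (a + η) ^ (-α) * d
      ≤ (1 - α) * (a + η) ^ (-α) * ((1 / (1 - α)) * c * a ^ α) := by
        gcongr
    _ = c * (a ^ α * (a + η) ^ (-α)) := by field_simp
    _ ≤ c := mul_le_of_le_one_right hc hratio

lemma antitone_rpow_add_sub_integral {α η : ℝ} (hα : α < 1) (hα0 : 0 ≤ α) (hη : 0 < η)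
    {f x : ℝ → ℝ} (hf : Continuous f) (hf0 : ∀ t, 0 ≤ f t)
    (hx : Differentiable ℝ x) (hx0 : ∀ t, 0 ≤ x t)
    (hineq : ∀ t, deriv x t ≤ (1 / (1 - α)) * f t * x t ^ α) :
    Antitone fun s => (x s + η) ^ (1 - α) - ∫ u in (0 : ℝ)..s, f u := by
  have hderiv : ∀ s, HasDerivAt (fun s => (x s + η) ^ (1 - α) - ∫ u in (0 : ℝ)..s, f u)
      ((1 - α) * (x s + η) ^ (-α) * deriv x s - f s) s := by
    intro s
    have hpow := ((hx s).hasDerivAt.add_const η).rpow_const (p := 1 - α)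
      (Or.inl (by linarith [hx0 s]))
    have hint := (hf.integral_hasStrictDerivAt 0 s).hasDerivAt
    refine (hpow.sub hint).congr_deriv ?_
    rw [sub_sub_cancel_left]
    ring
  refine antitone_of_deriv_nonpos (fun s => (hderiv s).differentiableAt) fun s => ?_
  rw [(hderiv s).deriv, sub_nonpos]
  exact one_sub_mul_rpow_neg_mul_le hα hα0 (hx0 s) hη (hf0 s) (hineq s)

lemma rpow_le_rpow_add_of_forall_pos {p a b C : ℝ} (hp : 0 ≤ p)
    (h : ∀ η > 0, (a + η) ^ p ≤ (b + η) ^ p + C) : a ^ p ≤ b ^ p + C := by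
  have hlim : ∀ c : ℝ, Tendsto (fun η => (c + η) ^ p) (𝓝[>] 0) (𝓝 (c ^ p)) := fun c => by
    simpa using ((continuous_const_add c).rpow_const fun _ => Or.inr hp).tendsto 0
      |>.mono_left nhdsWithin_le_nhds
  exact le_of_tendsto_of_tendsto (hlim a) ((hlim b).add_const C)
    (eventually_nhdsWithin_of_forall h)

theorem gronwall_type_power_lemma
    (α : ℝ) (hα : α ∈ Set.Ioo (0 : ℝ) 1)
    (f : ℝ → ℝ) (hf : Continuous f) (hf0 : ∀ t, 0 ≤ f t)
    (x : ℝ → ℝ) (hx : Differentiable ℝ x) (hx0 : ∀ t, 0 ≤ x t)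
    (hineq : ∀ t : ℝ, deriv x t ≤ (1 / (1 - α)) * f t * x t ^ α) :
    ∀ t : ℝ, 0 ≤ t → x t ^ (1 - α) ≤ x 0 ^ (1 - α) + ∫ s in (0 : ℝ)..t, f s := by
  intro t ht
  refine rpow_le_rpow_add_of_forall_pos (by linarith [hα.2]) fun η hη => ?_
  have hmono := antitone_rpow_add_sub_integral hα.2 hα.1.le hη hf hf0 hx hx0 hineq ht
  simp only [intervalIntegral.integral_same, sub_zero] at hmono
  linarith
end
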